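/- Let ρ > 0, ν_m > 0, 0 < δ < H, and let ν : ℝ³ → ℝ be a measurable function with ν(v) ≥ ν_m(1 + |v|) for all v. Then the integral ∫_δ^H ∫_{ℝ³} v_z^{-2} exp(−2ρν(v)z/|v_z| − v_z²) dv dz is finite. -/

import Mathlib

open Set MeasureTheory

/-! For `z ≥ δ` the exponent is at least `c (1 + |v|) / |v_z| + v_z²` with `c = 2ρν_mδ`. Split it:
`c / |v_z|` absorbs the singular factor `v_z⁻²`, each of `c |v_x| / (2|v_z|) + v_z² / 3` and
`c |v_y| / (2|v_z|) + v_z² / 3` gives decay `(1 + v_x²)⁻¹`, resp. `(1 + v_y²)⁻¹`, uniformly in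
`v_z`, and the remaining `v_z² / 3` gives a Gaussian in `v_z`. The resulting product majorant is
integrable on `(δ, H) × ℝ³`. -/

namespace Real

theorem inv_sq_mul_exp_neg_div_le {c t : ℝ} (hc : 0 < c) (ht : 0 < t) :
    (t ^ 2)⁻¹ * exp (-(c / t)) ≤ 2 / c ^ 2 := by
  have h := pow_div_factorial_le_exp _ (div_pos hc ht).le 2
  rw [exp_neg, ← div_eq_mul_inv, div_le_iff₀ (by positivity)]
  calc (t ^ 2)⁻¹ = 2 / c ^ 2 * ((c / t) ^ 2 / Nat.factorial 2) := by
        field_simp; norm_num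
    _ ≤ 2 / c ^ 2 * exp (c / t) := by gcongr

/-- Uses `(α + β) ^ 3 ≥ 3 α ^ 2 β` with `α = a |x| / t`, `β = t ^ 2 / 3`, in which `t` cancels. -/
theorem exp_neg_mul_abs_div_add_sq_le {a t : ℝ} (x : ℝ) (ha : 0 < a) (ht : 0 < t) :
    exp (-(a * |x| / t + t ^ 2 / 3)) ≤ (1 + 6 / a ^ 2) * (1 + x ^ 2)⁻¹ := by
  set α := a * |x| / t
  set β := t ^ 2 / 3
  have hα : 0 ≤ α := by positivity
  have hβ : 0 < β := by positivity
  have hcube : a ^ 2 * x ^ 2 ≤ (α + β) ^ 3 := by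
    have : 3 * α ^ 2 * β = a ^ 2 * x ^ 2 := by
      simp only [α, β, div_pow, mul_pow, sq_abs]; field_simp
    nlinarith [mul_nonneg (mul_nonneg hα hα) hα, mul_nonneg (mul_nonneg hα hβ.le) hβ.le,
      mul_nonneg (mul_nonneg hβ.le hβ.le) hβ.le]
  have hexp := pow_div_factorial_le_exp _ (add_pos_of_nonneg_of_pos hα hβ).le 3
  have hsmall : exp (-(α + β)) * x ^ 2 ≤ 6 / a ^ 2 := by
    rw [exp_neg, inv_mul_eq_div, div_le_div_iff₀ (exp_pos _) (by positivity)]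
    norm_num [Nat.factorial] at hexp
    nlinarith
  have hle_one : exp (-(α + β)) ≤ 1 := exp_le_one_iff.mpr (by linarith)
  rw [← div_eq_mul_inv, le_div_iff₀ (by positivity)]
  linarith

end Real

open Real

noncomputable def cauchyCauchyGaussian (v : ℝ × ℝ × ℝ) : ℝ :=
  (1 + v.1 ^ 2)⁻¹ * ((1 + v.2.1 ^ 2)⁻¹ * exp (-(1 / 3) * v.2.2 ^ 2))

theorem integrable_cauchyCauchyGaussian : Integrable cauchyCauchyGaussian := by
  have hgauss : Integrable fun w : ℝ => exp (-(1 / 3) * w ^ 2) :=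
    integrable_exp_neg_mul_sq (by norm_num)
  rw [Measure.volume_eq_prod, Measure.volume_eq_prod]
  exact integrable_inv_one_add_sq.mul_prod (integrable_inv_one_add_sq.mul_prod hgauss)

theorem inv_sq_mul_exp_neg_div_abs_sub_sq_le {c s : ℝ} (x y w : ℝ) (hc : 0 < c)
    (hs : c * (1 + √(x ^ 2 + y ^ 2 + w ^ 2)) ≤ s) :
    (w ^ 2)⁻¹ * exp (-s / |w| - w ^ 2) ≤
      2 / c ^ 2 * (1 + 6 / (c / 2) ^ 2) ^ 2 * cauchyCauchyGaussian (x, y, w) := by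
  rcases eq_or_ne w 0 with rfl | hw
  · simp only [ne_eq, OfNat.ofNat_ne_zero, not_false_eq_true, zero_pow, inv_zero, zero_mul]
    unfold cauchyCauchyGaussian
    positivity
  set t := |w|
  have ht : 0 < t := abs_pos.mpr hw
  have hwt : w ^ 2 = t ^ 2 := (sq_abs w).symm
  have hx : |x| ≤ √(x ^ 2 + y ^ 2 + w ^ 2) :=
    abs_le_sqrt (by nlinarith [sq_nonneg y, sq_nonneg w])
  have hy : |y| ≤ √(x ^ 2 + y ^ 2 + w ^ 2) :=
    abs_le_sqrt (by nlinarith [sq_nonneg x, sq_nonneg w])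
  have hsplit : c / t + (c / 2 * |x| / t + t ^ 2 / 3) + (c / 2 * |y| / t + t ^ 2 / 3) +
      t ^ 2 / 3 ≤ s / t + w ^ 2 := by
    have : c + c / 2 * |x| + c / 2 * |y| ≤ s := by nlinarith
    rw [hwt]
    have := div_le_div_of_nonneg_right this ht.le
    field_simp at this ⊢
    linarith
  have hc2 : 0 < c / 2 := by positivity
  calc (w ^ 2)⁻¹ * exp (-s / |w| - w ^ 2)
      ≤ (t ^ 2)⁻¹ * exp (-(c / t) + -(c / 2 * |x| / t + t ^ 2 / 3) +
          -(c / 2 * |y| / t + t ^ 2 / 3) + -(1 / 3) * w ^ 2) := by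
        rw [hwt]; gcongr; rw [neg_div]; linarith
    _ = ((t ^ 2)⁻¹ * exp (-(c / t))) * exp (-(c / 2 * |x| / t + t ^ 2 / 3)) *
          exp (-(c / 2 * |y| / t + t ^ 2 / 3)) * exp (-(1 / 3) * w ^ 2) := by
        simp only [exp_add]; ring
    _ ≤ 2 / c ^ 2 * ((1 + 6 / (c / 2) ^ 2) * (1 + x ^ 2)⁻¹) *
          ((1 + 6 / (c / 2) ^ 2) * (1 + y ^ 2)⁻¹) * exp (-(1 / 3) * w ^ 2) := by
        gcongr
        · exact inv_sq_mul_exp_neg_div_le hc ht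
        · exact exp_neg_mul_abs_div_add_sq_le x hc2 ht
        · exact exp_neg_mul_abs_div_add_sq_le y hc2 ht
    _ = 2 / c ^ 2 * (1 + 6 / (c / 2) ^ 2) ^ 2 * cauchyCauchyGaussian (x, y, w) := by
        unfold cauchyCauchyGaussian; ring

theorem damped_transport_kernel_integrable_general
    (ρ νm δ H : ℝ) (hρ : 0 < ρ) (hνm : 0 < νm) (hδ : 0 < δ)
    (ν : ℝ × ℝ × ℝ → ℝ) (hν : Measurable ν)
    (hlb : ∀ v : ℝ × ℝ × ℝ,
      νm * (1 + Real.sqrt (v.1 ^ 2 + v.2.1 ^ 2 + v.2.2 ^ 2)) ≤ ν v) :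
    IntegrableOn
      (fun p : ℝ × (ℝ × ℝ × ℝ) =>
        (p.2.2.2 ^ 2)⁻¹ *
          Real.exp (-(2 * ρ * ν p.2 * p.1) / |p.2.2.2| - p.2.2.2 ^ 2))
      (Ioo δ H ×ˢ univ) := by
  set c := 2 * ρ * νm * δ
  have hc : 0 < c := by positivity
  have hmajorant : IntegrableOn
      (fun p : ℝ × (ℝ × ℝ × ℝ) =>
        2 / c ^ 2 * (1 + 6 / (c / 2) ^ 2) ^ 2 * cauchyCauchyGaussian p.2)
      (Ioo δ H ×ˢ univ) := by
    rw [IntegrableOn, Measure.volume_eq_prod, ← Measure.prod_restrict, Measure.restrict_univ]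
    exact (integrable_cauchyCauchyGaussian.const_mul _).comp_snd _
  refine hmajorant.mono' (by fun_prop) ?_
  filter_upwards [ae_restrict_mem (measurableSet_Ioo.prod MeasurableSet.univ)] with p hp
  have hz : δ ≤ p.1 := hp.1.1.le
  have hν_pos : 0 ≤ ν p.2 := le_trans (by positivity) (hlb p.2)
  rw [Real.norm_of_nonneg (by positivity)]
  refine inv_sq_mul_exp_neg_div_abs_sub_sq_le _ _ _ hc ?_
  calc c * (1 + √(p.2.1 ^ 2 + p.2.2.1 ^ 2 + p.2.2.2 ^ 2))
      = 2 * ρ * (νm * (1 + √(p.2.1 ^ 2 + p.2.2.1 ^ 2 + p.2.2.2 ^ 2))) * δ := by ring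
    _ ≤ 2 * ρ * ν p.2 * p.1 := by gcongr; exact hlb p.2

/-- Finiteness of `∫_δ^H ∫_{ℝ³} v_z⁻² exp(−2ρν(v)z/|v_z| − v_z²) dv dz` for a collision
frequency `ν` with `ν(v) ≥ ν_m(1 + |v|)`. Here points of `ℝ³` are `v = (v_x, v_y, v_z)`. -/
theorem damped_transport_kernel_integrable
    (ρ νm δ H : ℝ) (hρ : 0 < ρ) (hνm : 0 < νm) (hδ : 0 < δ) (hδH : δ < H)
    (ν : ℝ × ℝ × ℝ → ℝ) (hν : Measurable ν)
    (hlb : ∀ v : ℝ × ℝ × ℝ,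
      νm * (1 + Real.sqrt (v.1 ^ 2 + v.2.1 ^ 2 + v.2.2 ^ 2)) ≤ ν v) :
    IntegrableOn
      (fun p : ℝ × (ℝ × ℝ × ℝ) =>
        (p.2.2.2 ^ 2)⁻¹ *
          Real.exp (-(2 * ρ * ν p.2 * p.1) / |p.2.2.2| - p.2.2.2 ^ 2))
      (Ioo δ H ×ˢ univ) :=
  damped_transport_kernel_integrable_general ρ νm δ H hρ hνm hδ ν hν hlb
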